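/- arXiv:1602.00471 — 3 statements merged into one kernel-verified Lean document; each statement's English description precedes it below -/
import Mathlib

section
/- Define p_0(x) = (1+x)^n and recursively p_{i}(x) = x · p_{i-1}'(x). Then for every 0 ≤ k ≤ n, the polynomial (1+x)^{n-k} divides p_k(x). -/
open Polynomial

/-- `p n 0 = (1+X)^n`, `p n (i+1) = X * (p n i)'`. -/
noncomputable def p (n : ℕ) : ℕ → Polynomial ℚ
  | 0 => (1 + X) ^ n
  | i + 1 => X * derivative (p n i)

/-- For every `0 ≤ k ≤ n`, the polynomial `(1+X)^(n-k)` divides `p n k`. -/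
theorem stmt_1 (n k : ℕ) (hk : k ≤ n) : (1 + X) ^ (n - k) ∣ p n k := by
  induction k with
  | zero => simp [p]
  | succ k ih =>
    obtain ⟨q, hq⟩ := ih (Nat.le_of_succ_le hk)
    have hm : n - k = (n - (k + 1)) + 1 := by omega
    set s := n - (k + 1) with hs
    show (1 + X) ^ s ∣ p n (k + 1)
    rw [show p n (k+1) = X * derivative (p n k) from rfl, hq, hm, derivative_mul,
      derivative_pow]
    simp only [Nat.add_sub_cancel]
    refine dvd_add ⟨C ((s : ℚ) + 1) * derivative (1 + X) * q, by push_cast; ring⟩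
      ⟨(1 + X) * derivative q, by ring⟩ |>.mul_left X
end

section
/- For n ≥ 3, define Q_n = ∑_{N=1}^{n} C(n,N) · N^{N-1} · A_{n-N}(-n), where A_m(x) = x(x+m)^{m-1} for m ≥ 1 and A_0(x) = 1. Then Q_n = 0. -/
/-!
For `1 ≤ N ≤ n` we have `-n + (n - N) = -N`, so the summand equals
`n · (-1)^(n-N) · C(n,N) · N^(n-2)`. Hence `Q_n` is `n` times the `n`-th forward difference of
`x ↦ x^(n-2)` at `0` (the `N = 0` term vanishes because `n - 2 > 0`), and this difference is zero
since `n - 2 < n`.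
-/

/-- The Abel polynomial with parameter `a = -1`:
`A m x = x * (x + m)^(m-1)` for `m ≥ 1`, and `A 0 x = 1`. -/
def abel (m : ℕ) (x : ℚ) : ℚ := if m = 0 then 1 else x * (x + m) ^ (m - 1)

open Finset fwdDiff

theorem sum_range_neg_one_pow_mul_choose_mul_pow_eq_zero {R : Type*} [CommRing R] {j n : ℕ}
    (h : j < n) :
    ∑ k ∈ range (n + 1), (-1 : R) ^ (n - k) * n.choose k * (k : R) ^ j = 0 := by
  have := fwdDiff_iter_eq_sum_shift (1 : R) (fun r ↦ r ^ j) n 0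
  rw [fwdDiff_iter_pow_eq_zero_of_lt h] at this
  simpa [zsmul_eq_mul] using this.symm

theorem abel_neg_add {m : ℕ} (hm : m ≠ 0) (x : ℚ) :
    abel m (-(x + m)) = -(x + m) * (-1) ^ (m - 1) * x ^ (m - 1) := by
  rw [abel, if_neg hm, show -(x + m) + m = -x by ring, neg_pow]
  ring

theorem choose_mul_pow_mul_abel_eq {n N : ℕ} (hN : N ∈ Icc 1 n) :
    (n.choose N : ℚ) * (N : ℚ) ^ (N - 1) * abel (n - N) (-(n : ℚ))
      = n * ((-1) ^ (n - N) * n.choose N * (N : ℚ) ^ (n - 2)) := by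
  obtain ⟨K, rfl⟩ : ∃ K, N = K + 1 := ⟨N - 1, by grind⟩
  obtain ⟨m, rfl⟩ : ∃ m, n = K + 1 + m := ⟨n - (K + 1), by grind⟩
  rcases m with _ | m
  · rcases K with _ | K <;> simp [abel, pow_succ']
  · have := abel_neg_add (m := m + 1) m.succ_ne_zero (K + 1 : ℕ)
    simp only [Nat.add_sub_cancel_left, Nat.add_sub_cancel] at this ⊢
    rw [show K + 1 + (m + 1) - 2 = K + m by omega]
    push_cast at this ⊢
    rw [this]
    ring

/-- For `n ≥ 3`, `Q_n = ∑_{N=1}^{n} C(n,N) · N^{N-1} · A_{n-N}(-n) = 0`. -/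
theorem stmt_3 (n : ℕ) (hn : 3 ≤ n) :
    ∑ N ∈ Finset.Icc 1 n, (n.choose N : ℚ) * (N : ℚ) ^ (N - 1) * abel (n - N) (-(n : ℚ)) = 0 := by
  rw [sum_congr rfl fun N hN ↦ choose_mul_pow_mul_abel_eq hN, ← mul_sum]
  have h := sum_range_neg_one_pow_mul_choose_mul_pow_eq_zero (R := ℚ) (show n - 2 < n by omega)
  rw [range_eq_Ico, sum_eq_sum_Ico_succ_bot (by omega), Nat.cast_zero,
    zero_pow (by omega), mul_zero, zero_add, Finset.Ico_add_one_right_eq_Icc] at h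
  rw [h, mul_zero]
end

section
/- Let t_{n,k} denote the number of forests on n labeled vertices consisting of exactly k rooted trees (each tree has one marked root vertex). Then for all n ≥ 0, ∑_{k=0}^{n} t_{n,k} · x^k = x(x+n)^{n-1} as polynomials in x (with the convention that for n = 0 the sum equals 1). -/
open Polynomial

/-!
A rooted forest on a finite set `V` is the same thing as an acyclic parent map
`f : V → Option V`: roots are sent to `none`, every other vertex to its neighbour on the way to
its root. Pitman's double counting then applies to parent maps: a forest with `s` edges
extends in `n (n - 1 - s)` ways to one with `s + 1` edges (make a root `v` the child of a vertex
`p` outside the tree of `v`), and a forest with `s + 1` edges arises in this way from exactly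
`s + 1` forests (delete one edge). Hence there are `n ^ s * (n - 1).choose s` forests with `s`
edges, i.e. `t_{n,k} = n ^ (n - k) * (n - 1).choose (k - 1)`, and the binomial theorem gives
`x (x + n) ^ (n - 1)`.
-/

/-- `rootedForests n k` is the number of rooted forests on `n` labeled vertices
consisting of exactly `k` rooted trees: an acyclic simple graph on `{1,...,n}`
together with a set of `k` roots, exactly one in each connected component. -/
noncomputable def rootedForests (n k : ℕ) : ℕ :=
  Nat.card {F : SimpleGraph (Fin n) × Finset (Fin n) //
    F.1.IsAcyclic ∧
    (∀ c : F.1.ConnectedComponent, ∃! v, v ∈ F.2 ∧ F.1.connectedComponentMk v = c) ∧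
    F.2.card = k}

namespace SimpleGraph

variable {V : Type*} {G : SimpleGraph V} {u v w w' : V}

theorem Reachable.exists_adj_dist_add_one (h : G.Reachable u v) (hne : u ≠ v) :
    ∃ w, G.Adj v w ∧ G.dist u w + 1 = G.dist u v := by
  obtain ⟨p, hp⟩ := h.symm.exists_walk_length_eq_dist
  cases p with
  | nil => exact absurd rfl hne
  | cons hadj q =>
    refine ⟨_, hadj, ?_⟩
    have hq : G.dist u _ ≤ q.length := dist_comm (G := G) ▸ dist_le q
    rw [Walk.length_cons, dist_comm] at hp
    rcases hadj.diff_dist_adj (u := u) with h | h | h <;> omega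

theorem IsAcyclic.eq_of_adj_of_dist_add_one (hG : G.IsAcyclic) (hw : G.Adj v w)
    (hw' : G.Adj v w') (hdw : G.dist u w + 1 = G.dist u v) (hdw' : G.dist u w' + 1 = G.dist u v) :
    w = w' := by
  have huv : G.Reachable u v := Reachable.of_dist_ne_zero (by omega)
  have hpath : ∀ {x}, G.Adj v x → G.dist u x + 1 = G.dist u v →
      ∃ q : G.Walk u x, ∃ hx : G.Adj x v, (q.concat hx).IsPath := fun {x} hx hdx => by
    obtain ⟨q, -, hq⟩ := (huv.trans hx.reachable).exists_path_of_dist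
    exact ⟨q, hx.symm, Walk.isPath_of_length_eq_dist _ (by simp [hq, hdx])⟩
  obtain ⟨q, hx, hq⟩ := hpath hw hdw
  obtain ⟨q', hx', hq'⟩ := hpath hw' hdw'
  simpa using congrArg (fun p : G.Path u v => p.1.penultimate)
    ((hG.subsingleton_path u v).elim ⟨_, hq⟩ ⟨_, hq'⟩)

end SimpleGraph

namespace ParentMap

open Relation

variable {α : Type*} {f g : α → Option α} {u v w p r r' : α} {s : ℕ}

/-- `f v = some w` says that `w` is the parent of `v`; the roots are the `v` with `f v = none`. -/
def Parent (f : α → Option α) (v w : α) : Prop := f v = some w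

/-- Following parents from any vertex reaches a root after finitely many steps. -/
def IsAcyclic (f : α → Option α) : Prop := WellFounded (flip (Parent f))

def IsRootOf (f : α → Option α) (v r : α) : Prop := ReflTransGen (Parent f) v r ∧ f r = none

theorem IsAcyclic.exists_isRootOf (hf : IsAcyclic f) (v : α) : ∃ r, IsRootOf f v r := by
  induction v using hf.induction with
  | _ v ih =>
    cases hv : f v with
    | none => exact ⟨v, .refl, hv⟩
    | some w =>
      obtain ⟨r, hwr, hr⟩ := ih w hv
      exact ⟨r, .head hv hwr, hr⟩

theorem eq_of_reflTransGen_of_eq_none (h : ReflTransGen (Parent f) r v) (hr : f r = none) :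
    v = r :=
  (h.cases_head.resolve_right fun ⟨_, hrw, _⟩ => by simp [Parent, hr] at hrw).symm

theorem IsRootOf.unique (h : IsRootOf f v r) (h' : IsRootOf f v r') : r = r' := by
  have hU : Relator.RightUnique (Parent f) := fun a b c hab hac =>
    Option.some_injective _ (hab.symm.trans hac)
  rcases h.1.total_of_right_unique hU h'.1 with hrr' | hr'r
  · exact (eq_of_reflTransGen_of_eq_none hrr' h.2).symm
  · exact eq_of_reflTransGen_of_eq_none hr'r h'.2

theorem IsAcyclic.mono (hf : IsAcyclic f) (hg : ∀ v w, g v = some w → f v = some w) :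
    IsAcyclic g :=
  Subrelation.wf (fun h => hg _ _ h) hf

theorem IsAcyclic.ne_of_parent (hf : IsAcyclic f) (h : f v = some w) : v ≠ w := by
  rintro rfl
  exact hf.irrefl.irrefl v h

section Update

open Function

variable [DecidableEq α]

theorem IsAcyclic.update_none (hf : IsAcyclic f) (v : α) : IsAcyclic (update f v none) :=
  hf.mono fun u w h => by
    by_cases huv : u = v
    · simp [huv] at h
    · rwa [update_of_ne huv] at h

theorem reflTransGen_parent_update (h : ReflTransGen (Parent f) u v) (hv : f v = none)
    (o : Option α) : ReflTransGen (Parent (update f v o)) u v := by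
  induction h using ReflTransGen.head_induction_on with
  | refl => exact .refl
  | head hu _ ih =>
    refine .head ?_ ih
    rw [Parent, update_of_ne]
    · exact hu
    · rintro rfl; simp [Parent, hv] at hu

theorem IsAcyclic.update_some_iff (hf : IsAcyclic f) (hv : f v = none) :
    IsAcyclic (update f v (some p)) ↔ ¬ ReflTransGen (Parent f) p v := by
  set f' := update f v (some p)
  have hf'_of_ne : ∀ {u}, u ≠ v → f' u = f u := fun hu => update_of_ne hu _ _
  constructor
  · intro hf' hpv
    have hvv : TransGen (Parent f') v v :=
      .head' (by simp [f', Parent]) (reflTransGen_parent_update hpv hv _)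
    exact hf'.transGen.irrefl.irrefl v hvv.swap
  · -- Vertices not below `v` keep their parents, and `v` now steps to such a vertex `p`.
    intro hpv
    have hacc : ∀ u, ¬ ReflTransGen (Parent f) u v → Acc (flip (Parent f')) u := by
      intro u
      induction u using hf.induction with
      | _ u ih =>
        intro huv
        have hne : u ≠ v := by rintro rfl; exact huv .refl
        refine Acc.intro u fun w hw => ih w ?_ fun hwv => huv (.head ?_ hwv)
        all_goals rwa [flip, Parent, hf'_of_ne hne] at hw
    refine ⟨fun u => ?_⟩
    induction u using hf.induction with
    | _ u ih =>
      refine Acc.intro u fun w hw => ?_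
      by_cases huv : u = v
      · obtain rfl : w = p := by simpa [flip, Parent, f', huv] using hw.symm
        exact hacc w hpv
      · exact ih w (by rwa [flip, Parent, hf'_of_ne huv] at hw)

end Update

section Graph

open SimpleGraph Function

def graph (f : α → Option α) : SimpleGraph α := fromRel (Parent f)

theorem graph_adj : (graph f).Adj v w ↔ v ≠ w ∧ (f v = some w ∨ f w = some v) :=
  fromRel_adj ..

theorem IsAcyclic.graph_adj (hf : IsAcyclic f) :
    (graph f).Adj v w ↔ f v = some w ∨ f w = some v := by
  rw [ParentMap.graph_adj, and_iff_right_iff_imp]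
  rintro (h | h)
  exacts [hf.ne_of_parent h, (hf.ne_of_parent h).symm]

theorem IsAcyclic.reachable_of_reflTransGen (hf : IsAcyclic f)
    (h : ReflTransGen (Parent f) v w) : (graph f).Reachable v w :=
  (reachable_iff_reflTransGen v w).mpr <|
    ReflTransGen.mono (fun _ _ hab => hf.graph_adj.mpr (.inl hab)) _ _ h

theorem IsAcyclic.isRootOf_of_reachable (hf : IsAcyclic f) (h : (graph f).Reachable v w)
    (hr : IsRootOf f v r) : IsRootOf f w r := by
  replace h := (reachable_iff_reflTransGen v w).mp h
  induction h with
  | refl => exact hr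
  | tail _ hab ih =>
    rcases hf.graph_adj.mp hab with hab | hba
    · obtain ⟨r', hr'⟩ := hf.exists_isRootOf _
      exact (ih.unique ⟨.head hab hr'.1, hr'.2⟩).symm ▸ hr'
    · exact ⟨.head hba ih.1, ih.2⟩

theorem IsAcyclic.reachable_iff (hf : IsAcyclic f) (hv : f v = none) :
    (graph f).Reachable p v ↔ ReflTransGen (Parent f) p v := by
  refine ⟨fun h => ?_, hf.reachable_of_reflTransGen⟩
  obtain ⟨r, hr⟩ := hf.exists_isRootOf p
  obtain rfl : v = r := eq_of_reflTransGen_of_eq_none (hf.isRootOf_of_reachable h hr).1 hv |>.symm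
  exact hr.1

theorem IsAcyclic.existsUnique_root (hf : IsAcyclic f) (c : (graph f).ConnectedComponent) :
    ∃! v, f v = none ∧ (graph f).connectedComponentMk v = c := by
  induction c using ConnectedComponent.ind with
  | h u =>
    obtain ⟨r, hr⟩ := hf.exists_isRootOf u
    refine ⟨r, ⟨hr.2, ConnectedComponent.sound (hf.reachable_of_reflTransGen hr.1).symm⟩,
      fun v ⟨hv, hvu⟩ => ?_⟩
    exact (eq_of_reflTransGen_of_eq_none
      (hf.isRootOf_of_reachable (ConnectedComponent.exact hvu).symm hr).1 hv).symm

theorem graph_update_some [DecidableEq α] (hv : f v = none) :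
    graph (update f v (some p)) = graph f ⊔ edge v p := by
  ext a b
  simp only [sup_adj, ParentMap.graph_adj, edge_adj, update_apply]
  by_cases ha : a = v <;> by_cases hb : b = v <;> simp_all <;> tauto

theorem IsAcyclic.isAcyclic_graph [DecidableEq α] (hf : IsAcyclic f) : (graph f).IsAcyclic := by
  refine isAcyclic_iff_forall_adj_isBridge.mpr fun a b hab => ?_
  wlog hfa : f a = some b generalizing a b
  · rw [Sym2.eq_swap]
    exact this b a hab.symm ((hf.graph_adj.mp hab).resolve_left hfa)
  set g := update f a none
  have hg : IsAcyclic g := hf.update_none a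
  have hga : g a = none := update_self ..
  have hfg : update g a (some b) = f := by simp [g, ← hfa]
  rw [← hfg, graph_update_some hga, isBridge_sup_edge]
  refine IsBridge.of_not_reachable fun h => ?_
  exact (hg.update_some_iff hga).mp (hfg ▸ hf) ((hg.reachable_iff hga).mp h.symm)

theorem IsAcyclic.eq_of_graph_eq (hf : IsAcyclic f) (hG : graph f = graph g)
    (hroots : ∀ v, f v = none ↔ g v = none) : f = g := by
  -- At a disagreement `v` whose `f`-parent `w` is not one, the edge `vw` of `graph g` forces
  -- `g w = some v`, hence `f w = some v`: a 2-cycle of `f`.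
  by_contra hne
  obtain ⟨v, hv, hmin⟩ :=
    hf.has_min {v | f v ≠ g v} (by simpa [funext_iff, Set.Nonempty] using hne)
  cases hfv : f v with
  | none => exact hv (hfv.trans ((hroots v).mp hfv).symm)
  | some w =>
    have hw : f w = g w := not_not.mp fun hw => hmin w hw hfv
    have hadj : (graph g).Adj v w := hG ▸ hf.graph_adj.mpr (.inl hfv)
    rcases (ParentMap.graph_adj.mp hadj).2 with hgv | hgw
    · exact hv (hfv.trans hgv.symm)
    · exact hf.asymmetric _ _ hfv (hw.trans hgw)

/-- Every vertex outside `R` points to its neighbour one step closer to the root of its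
component; in a forest that neighbour is unique, so the edges of `G` are exactly these
parent links. -/
theorem exists_isAcyclic_graph_eq {G : SimpleGraph α} (hG : G.IsAcyclic) {R : Set α}
    (hR : ∀ c : G.ConnectedComponent, ∃! v, v ∈ R ∧ G.connectedComponentMk v = c) :
    ∃ f, IsAcyclic f ∧ graph f = G ∧ ∀ v, f v = none ↔ v ∈ R := by
  classical
  choose ρ hρR hρc using fun c => (hR c).exists
  set r : α → α := fun v => ρ (G.connectedComponentMk v)
  have hreach : ∀ v, G.Reachable (r v) v := fun v => ConnectedComponent.exact (hρc _)
  have hr_adj : ∀ {a b}, G.Adj a b → r a = r b := fun hab =>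
    congrArg ρ (ConnectedComponent.sound hab.reachable)
  have hmemR : ∀ {v}, v ∈ R ↔ r v = v := fun {v} =>
    ⟨fun hv => (hR _).unique ⟨hρR _, hρc _⟩ ⟨hv, rfl⟩, fun hv => hv ▸ hρR _⟩
  have hstep : ∀ v, v ∉ R → ∃ w, G.Adj v w ∧ G.dist (r v) w + 1 = G.dist (r v) v :=
    fun v hv => (hreach v).exists_adj_dist_add_one (mt hmemR.mpr hv)
  choose! par hadj hdist using hstep
  set f : α → Option α := fun v => if v ∈ R then none else some (par v)
  have hf_some : ∀ {v w}, f v = some w ↔ v ∉ R ∧ par v = w := by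
    intro v w; by_cases hv : v ∈ R <;> simp [f, hv]
  have hf_of_dist :
      ∀ {a b}, G.Adj a b → G.dist (r a) b + 1 = G.dist (r a) a → f a = some b := by
    intro a b hab hd
    have ha : a ∉ R := fun ha => by simp [hmemR.mp ha] at hd
    exact hf_some.mpr ⟨ha, hG.eq_of_adj_of_dist_add_one (hadj a ha) hab (hdist a ha) hd⟩
  refine ⟨f, ?_, ?_, fun v => by by_cases hv : v ∈ R <;> simp [f, hv]⟩
  · refine Subrelation.wf (fun {w v} h => ?_)
      (InvImage.wf (fun v => G.dist (r v) v) wellFounded_lt)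
    obtain ⟨hv, rfl⟩ := hf_some.mp h
    show G.dist (r (par v)) (par v) < G.dist (r v) v
    rw [← hr_adj (hadj v hv)]
    have := hdist v hv
    omega
  · ext a b
    rw [ParentMap.graph_adj]
    constructor
    · rintro ⟨-, hab | hba⟩
      · obtain ⟨ha, rfl⟩ := hf_some.mp hab
        exact hadj a ha
      · obtain ⟨hb, rfl⟩ := hf_some.mp hba
        exact (hadj b hb).symm
    · intro hab
      refine ⟨hab.ne, ?_⟩
      rcases hG.dist_eq_dist_add_one_of_adj_of_reachable (r a) hab (hreach a) with hd | hd
      · exact .inl (hf_of_dist hab hd.symm)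
      · rw [hr_adj hab] at hd
        exact .inr (hf_of_dist hab.symm hd.symm)

end Graph

section Counting

open Function Finset

variable [Fintype α]

def roots (f : α → Option α) : Finset α := {v | f v = none}

def nonroots (f : α → Option α) : Finset α := {v | f v ≠ none}

theorem card_roots_add_card_nonroots (f : α → Option α) :
    #(roots f) + #(nonroots f) = Fintype.card α :=
  card_filter_add_card_filter_not _

variable [DecidableEq α]

theorem nonroots_update_some :
    nonroots (update f v (some p)) = insert v (nonroots f) := by
  ext u
  by_cases huv : u = v <;> simp [nonroots, update_apply, huv]

theorem nonroots_update_none : nonroots (update f v none) = (nonroots f).erase v := by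
  ext u
  by_cases huv : u = v <;> simp [nonroots, update_apply, huv]

variable (α) in
open scoped Classical in
noncomputable def acyclicWithNonroots (s : ℕ) :
    Finset (α → Option α) :=
  {f | IsAcyclic f ∧ #(nonroots f) = s}

theorem mem_acyclicWithNonroots :
    f ∈ acyclicWithNonroots α s ↔ IsAcyclic f ∧ #(nonroots f) = s := by
  simp [acyclicWithNonroots]

def Extends (f g : α → Option α) : Prop := ∃ v p, f v = none ∧ update f v (some p) = g

open scoped Classical in
theorem IsAcyclic.card_roots_not_reflTransGen (hf : IsAcyclic f) (p : α) :
    #{v | f v = none ∧ ¬ ReflTransGen (Parent f) p v} = #(roots f) - 1 := by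
  obtain ⟨r, hr⟩ := hf.exists_isRootOf p
  have : ({v | f v = none ∧ ¬ ReflTransGen (Parent f) p v} : Finset α) = (roots f).erase r := by
    ext v
    simp only [mem_filter, mem_univ, true_and, mem_erase, roots]
    exact ⟨fun ⟨hv, hpv⟩ => ⟨fun hvr => hpv (hvr ▸ hr.1), hv⟩,
      fun ⟨hvr, hv⟩ => ⟨hv, fun hpv => hvr (hr.unique ⟨hpv, hv⟩).symm⟩⟩
  rw [this, card_erase_of_mem (by simpa [roots] using hr.2)]

open scoped Classical in
theorem card_extends (hf : IsAcyclic f) (hs : #(nonroots f) = s) :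
    #{g ∈ acyclicWithNonroots α (s + 1) | Extends f g} =
      Fintype.card α * (Fintype.card α - 1 - s) := by
  set P : Finset (α × α) := {vp | f vp.1 = none ∧ ¬ ReflTransGen (Parent f) vp.2 vp.1}
  have hP : ∀ p, #{v | f v = none ∧ ¬ ReflTransGen (Parent f) p v} = Fintype.card α - 1 - s :=
    fun p => by
      have := card_roots_add_card_nonroots f
      rw [hf.card_roots_not_reflTransGen]
      omega
  have himage : ({g ∈ acyclicWithNonroots α (s + 1) | Extends f g} : Finset _) =
      P.image fun vp => update f vp.1 (some vp.2) := by
    ext g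
    simp only [acyclicWithNonroots, mem_filter, mem_univ, true_and, mem_image, Prod.exists]
    simp only [Extends, P, mem_filter, mem_univ, true_and]
    constructor
    · rintro ⟨⟨hg, -⟩, v, p, hv, rfl⟩
      exact ⟨v, p, ⟨hv, (hf.update_some_iff hv).mp hg⟩, rfl⟩
    · rintro ⟨v, p, ⟨hv, hpv⟩, rfl⟩
      refine ⟨⟨(hf.update_some_iff hv).mpr hpv, ?_⟩, v, p, hv, rfl⟩
      rw [nonroots_update_some, card_insert_of_notMem (by simpa [nonroots] using hv), hs]
  rw [himage, card_image_of_injOn, card_filter, ← univ_product_univ, sum_product_right]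
  · simp_rw [← card_filter, hP, sum_const, card_univ, smul_eq_mul]
  · rintro ⟨v, p⟩ hvp ⟨v', p'⟩ hvp' h
    simp only [P, coe_filter, mem_univ, true_and, Set.mem_ofPred_eq] at hvp hvp'
    have hvv' : v = v' := by
      by_contra hne
      simpa [update_of_ne hne, hvp.1] using congrFun h v
    subst hvv'
    simpa using congrFun h v

open scoped Classical in
theorem card_extended_by (hg : IsAcyclic g) (hs : #(nonroots g) = s + 1) :
    #{f ∈ acyclicWithNonroots α s | Extends f g} = s + 1 := by
  have himage : ({f ∈ acyclicWithNonroots α s | Extends f g} : Finset _) =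
      (nonroots g).image fun v => update g v none := by
    ext f
    simp only [acyclicWithNonroots, mem_filter, mem_univ, true_and, mem_image]
    constructor
    · rintro ⟨-, v, p, hv, rfl⟩
      exact ⟨v, by simp [nonroots], by simpa using hv.symm⟩
    · rintro ⟨v, hv, rfl⟩
      obtain ⟨p, hp⟩ := Option.ne_none_iff_exists'.mp (mem_filter.mp hv).2
      refine ⟨⟨hg.update_none v, ?_⟩, v, p, by simp, by simp [← hp]⟩
      rw [nonroots_update_none, card_erase_of_mem hv, hs, Nat.add_sub_cancel]
  rw [himage, card_image_of_injOn, hs]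
  intro v hv w _ h
  by_contra hne
  have hgv : update g v none v = update g w none v := congrFun h v
  rw [update_self, update_of_ne hne] at hgv
  exact (mem_filter.mp hv).2 hgv.symm

theorem card_acyclicWithNonroots (s : ℕ) :
    #(acyclicWithNonroots α s) = Fintype.card α ^ s * (Fintype.card α - 1).choose s := by
  classical
  induction s with
  | zero =>
    have hbot : IsAcyclic (fun _ : α => none) :=
      ⟨fun v => ⟨v, fun w h => by simp [flip, Parent] at h⟩⟩
    rw [pow_zero, Nat.choose_zero_right, one_mul, card_eq_one]
    refine ⟨fun _ => none, eq_singleton_iff_unique_mem.mpr ⟨?_, fun f hf => ?_⟩⟩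
    · simp [acyclicWithNonroots, hbot, nonroots]
    · have hf := (mem_acyclicWithNonroots.mp hf).2
      simp only [nonroots, card_eq_zero, filter_eq_empty_iff, mem_univ, true_implies,
        not_not] at hf
      exact funext hf
  | succ s ih =>
    have hdouble := card_mul_eq_card_mul Extends
      (s := acyclicWithNonroots α s) (t := acyclicWithNonroots α (s + 1))
      (fun f hf => card_extends (mem_acyclicWithNonroots.mp hf).1 (mem_acyclicWithNonroots.mp hf).2)
      (fun g hg => card_extended_by (mem_acyclicWithNonroots.mp hg).1
        (mem_acyclicWithNonroots.mp hg).2)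
    apply Nat.eq_of_mul_eq_mul_right s.succ_pos
    rw [← hdouble, ih, mul_assoc, pow_succ, mul_assoc, Nat.choose_succ_right_eq]
    ring

theorem natCard_rootedForests {k : ℕ} (hk : k ≤ Fintype.card α) :
    Nat.card {F : SimpleGraph α × Finset α //
      F.1.IsAcyclic ∧
      (∀ c : F.1.ConnectedComponent, ∃! v, v ∈ F.2 ∧ F.1.connectedComponentMk v = c) ∧
      F.2.card = k} = #(acyclicWithNonroots α (Fintype.card α - k)) := by
  have hcard : ∀ f : α → Option α, #(roots f) = k ↔ #(nonroots f) = Fintype.card α - k :=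
    fun f => by have := card_roots_add_card_nonroots f; omega
  rw [← Nat.card_eq_finsetCard]
  symm
  refine Nat.card_congr (.ofBijective (fun f => ⟨(graph f.1, roots f.1), ?_⟩) ⟨?_, ?_⟩)
  · obtain ⟨hf, hs⟩ := mem_acyclicWithNonroots.mp f.2
    exact ⟨hf.isAcyclic_graph, fun c => by simpa [roots] using hf.existsUnique_root c,
      (hcard _).mpr hs⟩
  · intro f g h
    have h' := congrArg Subtype.val h
    simp only [Prod.mk.injEq] at h'
    refine Subtype.ext ((mem_acyclicWithNonroots.mp f.2).1.eq_of_graph_eq h'.1 fun v => ?_)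
    simpa [roots] using congrArg (v ∈ ·) h'.2
  · rintro ⟨⟨G, R⟩, hG, hR, hk⟩
    obtain ⟨f, hf, rfl, hroots⟩ := exists_isAcyclic_graph_eq hG (R := R) hR
    have hfR : roots f = R := by ext v; simp [roots, hroots]
    exact ⟨⟨f, mem_acyclicWithNonroots.mpr ⟨hf, (hcard f).mp (hfR ▸ hk)⟩⟩,
      Subtype.ext (Prod.ext rfl hfR)⟩

end Counting

end ParentMap

theorem rootedForests_eq {n k : ℕ} (hk : k ≤ n) :
    rootedForests n k = n ^ (n - k) * (n - 1).choose (n - k) := by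
  have h := ParentMap.natCard_rootedForests (α := Fin n) (k := k) (by simpa using hk)
  rwa [ParentMap.card_acyclicWithNonroots, Fintype.card_fin] at h

/-- `∑_{k=0}^{n} t_{n,k} · x^k = x(x+n)^{n-1}` as polynomials in `x`
(with the convention that for `n = 0` the sum equals `1`). -/
theorem stmt_5 (n : ℕ) :
    ∑ k ∈ Finset.range (n + 1), (rootedForests n k : Polynomial ℚ) * X ^ k
      = if n = 0 then 1 else X * (X + C (n : ℚ)) ^ (n - 1) := by
  rcases n with _ | m
  · simp [rootedForests_eq]
  rw [if_neg m.succ_ne_zero, Nat.add_sub_cancel, add_pow, Finset.mul_sum, Finset.sum_range_succ',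
    rootedForests_eq (Nat.zero_le _), Nat.choose_eq_zero_of_lt (by omega)]
  simp only [Nat.cast_zero, mul_zero, zero_mul, add_zero]
  refine Finset.sum_congr rfl fun j hj => ?_
  have hjm : j ≤ m := Nat.lt_succ_iff.mp (Finset.mem_range.mp hj)
  rw [rootedForests_eq (by omega), Nat.add_sub_cancel, show m + 1 - (j + 1) = m - j by omega,
    Nat.choose_symm hjm]
  simp only [Nat.cast_mul, Nat.cast_pow, map_natCast]
  ring
end
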